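/- arXiv:1911.10917 — 4 statements merged into one kernel-verified Lean document; each statement's English description precedes it below -/
import Mathlib

section
/- For any graph G, the chromatic number of G is at most the dynamic chromatic number of the 2-subdivision of G. (The 2-subdivision G* is obtained from G by replacing each edge uv with a path u-w-v through a new vertex w; a dynamic coloring is a proper coloring in which every vertex of degree at least 2 sees at least two distinct colors in its neighborhood.) -/
open Finset

open scoped Classical in
noncomputable def deg {V : Type*} [Fintype V] (G : SimpleGraph V) (v : V) : ℕ :=
  (Finset.univ.filter (fun u => G.Adj v u)).card

def IsProper {V : Type*} (G : SimpleGraph V) (c : V → ℕ) : Prop :=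
  ∀ u v, G.Adj u v → c u ≠ c v

def IsDynamic {V : Type*} [Fintype V] (G : SimpleGraph V) (c : V → ℕ) : Prop :=
  IsProper G c ∧ ∀ v, 2 ≤ deg G v → ∃ a b, G.Adj v a ∧ G.Adj v b ∧ c a ≠ c b

noncomputable def chrom {V : Type*} (G : SimpleGraph V) : ℕ :=
  sInf {n | ∃ c : V → ℕ, (∀ v, c v < n) ∧ IsProper G c}

noncomputable def dynChrom {V : Type*} [Fintype V] (G : SimpleGraph V) : ℕ :=
  sInf {n | ∃ c : V → ℕ, (∀ v, c v < n) ∧ IsDynamic G c}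

def subdiv {V : Type*} (G : SimpleGraph V) : SimpleGraph (V ⊕ G.edgeSet) where
  Adj x y :=
    match x, y with
    | Sum.inl u, Sum.inr e => u ∈ (e : Sym2 V)
    | Sum.inr e, Sum.inl u => u ∈ (e : Sym2 V)
    | _, _ => False
  symm := ⟨by rintro (u | e) (v | f) h <;> first | exact h | exact h.elim⟩
  loopless := ⟨by rintro (u | e) h <;> exact h⟩

noncomputable instance {V : Type*} [Fintype V] (G : SimpleGraph V) : Fintype G.edgeSet :=
  Fintype.ofFinite _

/-! The subdivision vertex of an edge `uv` has exactly the two neighbours `u` and `v`, so a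
dynamic colouring of `G*` must colour them differently; restricting it to `V` gives a proper
colouring of `G` with no more colours. -/

section Coloring

variable {V : Type*}

theorem chrom_le_of_isProper {G : SimpleGraph V} {c : V → ℕ} {n : ℕ} (hc : ∀ v, c v < n)
    (hproper : IsProper G c) : chrom G ≤ n :=
  Nat.sInf_le ⟨c, hc, hproper⟩

variable [Fintype V]

theorem two_le_deg_of_adj {G : SimpleGraph V} {v a b : V} (ha : G.Adj v a) (hb : G.Adj v b)
    (hab : a ≠ b) : 2 ≤ deg G v := by
  unfold deg
  exact Finset.one_lt_card.mpr ⟨a, by simpa using ha, b, by simpa using hb, hab⟩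

theorem isDynamic_of_injective (G : SimpleGraph V) {c : V → ℕ} (hc : Function.Injective c) :
    IsDynamic G c := by
  refine ⟨fun u v huv => hc.ne (G.ne_of_adj huv), fun v hv => ?_⟩
  unfold deg at hv
  obtain ⟨a, ha, b, hb, hab⟩ := Finset.one_lt_card.mp hv
  exact ⟨a, b, by simpa using ha, by simpa using hb, hc.ne hab⟩

theorem exists_isDynamic_lt_dynChrom (G : SimpleGraph V) :
    ∃ c : V → ℕ, (∀ v, c v < dynChrom G) ∧ IsDynamic G c :=
  Nat.sInf_mem (s := {n | ∃ c : V → ℕ, (∀ v, c v < n) ∧ IsDynamic G c})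
    ⟨Fintype.card V, fun v => Fintype.equivFin V v, fun v => (Fintype.equivFin V v).isLt,
      isDynamic_of_injective G (Fin.val_injective.comp (Fintype.equivFin V).injective)⟩

end Coloring

section Subdivision

variable {V : Type*} {G : SimpleGraph V}

theorem subdiv_adj_edge_iff {u v : V} (huv : G.Adj u v) (x : V ⊕ G.edgeSet) :
    (subdiv G).Adj (Sum.inr ⟨s(u, v), huv⟩) x ↔ x = Sum.inl u ∨ x = Sum.inl v := by
  rcases x with w | f
  · exact Sym2.mem_iff.trans (by simp)
  · simp [subdiv]

theorem IsDynamic.ne_of_adj_subdiv [Fintype V] {c : V ⊕ G.edgeSet → ℕ}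
    (hc : IsDynamic (subdiv G) c) {u v : V} (huv : G.Adj u v) :
    c (Sum.inl u) ≠ c (Sum.inl v) := by
  have hadj := subdiv_adj_edge_iff huv
  have hdeg : 2 ≤ deg (subdiv G) (Sum.inr ⟨s(u, v), huv⟩) :=
    two_le_deg_of_adj ((hadj _).mpr (.inl rfl)) ((hadj _).mpr (.inr rfl))
      (Sum.inl_injective.ne (G.ne_of_adj huv))
  obtain ⟨a, b, ha, hb, hab⟩ := hc.2 _ hdeg
  rcases (hadj a).mp ha with rfl | rfl <;> rcases (hadj b).mp hb with rfl | rfl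
  all_goals first | exact absurd rfl hab | exact hab | exact hab.symm

theorem IsDynamic.isProper_comp_inl [Fintype V] {c : V ⊕ G.edgeSet → ℕ}
    (hc : IsDynamic (subdiv G) c) : IsProper G (c ∘ Sum.inl) :=
  fun _ _ huv => hc.ne_of_adj_subdiv huv

end Subdivision

theorem chrom_le_dynChrom_subdiv_general {V : Type*} [Fintype V]
    (G : SimpleGraph V) : chrom G ≤ dynChrom (subdiv G) := by
  obtain ⟨c, hlt, hdyn⟩ := exists_isDynamic_lt_dynChrom (subdiv G)
  exact chrom_le_of_isProper (fun v => hlt (Sum.inl v)) hdyn.isProper_comp_inl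

theorem chrom_le_dynChrom_subdiv {V : Type*} [Fintype V] [DecidableEq V]
    (G : SimpleGraph V) : chrom G ≤ dynChrom (subdiv G) :=
  chrom_le_dynChrom_subdiv_general G
end

section
/- The dynamic chromatic number of the cycle C_n on n ≥ 3 vertices equals 3 if n ≡ 0 (mod 3), equals 5 if n = 5, and equals 4 otherwise. -/
open Finset

/-!
A colouring of `C_n` is dynamic iff any three cyclically consecutive vertices get distinct
colours. With three colours this forces the colouring to have period 3 as well as period `n`,
hence period `gcd 3 n`, which is impossible unless `3 ∣ n`. On `C_5` any two vertices are at
distance at most 2, so all five colours must differ. Conversely, a cycle of length `3a + 4b`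
is coloured by `a` blocks `0 1 2` followed by `b` blocks `0 1 2 3`, and every `n ≥ 3` other than
`5` has this form.
-/

open SimpleGraph

open scoped Fin.CommRing

theorem deg_eq_degree {V : Type*} [Fintype V] (G : SimpleGraph V) [DecidableRel G.Adj] (v : V) :
    deg G v = G.degree v := by
  rw [deg, ← card_neighborFinset_eq_degree, neighborFinset_eq_filter]
  congr!

theorem dynChrom_eq_of_forall_le {V : Type*} [Fintype V] {G : SimpleGraph V} {k : ℕ}
    (hex : ∃ c : V → ℕ, (∀ v, c v < k) ∧ IsDynamic G c)
    (hle : ∀ (k' : ℕ) (c : V → ℕ), IsDynamic G c → (∀ v, c v < k') → k ≤ k') :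
    dynChrom G = k :=
  le_antisymm (Nat.sInf_le hex) <| le_csInf ⟨k, hex⟩ fun _ ⟨c, hb, hc⟩ => hle _ c hc hb

namespace SimpleGraph

variable {m : ℕ}

theorem cycleGraph_adj_iff_eq_add_one {u v : Fin (m + 2)} :
    (cycleGraph (m + 2)).Adj u v ↔ u = v + 1 ∨ v = u + 1 := by
  rw [cycleGraph_adj, sub_eq_iff_eq_add', sub_eq_iff_eq_add']

theorem isDynamic_cycleGraph_iff {c : Fin (m + 3) → ℕ} :
    IsDynamic (cycleGraph (m + 3)) c ↔ ∀ v, c v ≠ c (v + 1) ∧ c v ≠ c (v + 2) := by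
  constructor
  · rintro ⟨hproper, hdyn⟩ v
    refine ⟨hproper _ _ (cycleGraph_adj_iff_eq_add_one.2 (Or.inr rfl)), ?_⟩
    have hdeg : 2 ≤ deg (cycleGraph (m + 3)) (v + 1) := by
      rw [deg_eq_degree, cycleGraph_degree_three_le]
    obtain ⟨a, b, ha, hb, hab⟩ := hdyn (v + 1) hdeg
    have hnbr : ∀ x, (cycleGraph (m + 3)).Adj (v + 1) x → x = v ∨ x = v + 2 := by
      intro x hx
      rcases cycleGraph_adj_iff_eq_add_one.1 hx with h | h
      · exact Or.inl (add_right_cancel h).symm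
      · exact Or.inr (by rw [h]; ring)
    rcases hnbr a ha with rfl | rfl <;> rcases hnbr b hb with rfl | rfl
    exacts [absurd rfl hab, hab, hab.symm, absurd rfl hab]
  · intro h
    refine ⟨fun u v huv => ?_, fun v _ => ⟨v - 1, v + 1, ?_, ?_, ?_⟩⟩
    · rcases cycleGraph_adj_iff_eq_add_one.1 huv with rfl | rfl
      exacts [(h v).1.symm, (h u).1]
    · exact cycleGraph_adj_iff_eq_add_one.2 (Or.inl (by ring))
    · exact cycleGraph_adj_iff_eq_add_one.2 (Or.inr rfl)
    · simpa only [show v - 1 + 2 = v + 1 by ring] using (h (v - 1)).2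

theorem three_le_of_isDynamic_cycleGraph {c : Fin (m + 3) → ℕ} {k : ℕ}
    (hc : IsDynamic (cycleGraph (m + 3)) c) (hb : ∀ v, c v < k) : 3 ≤ k := by
  have h0 := isDynamic_cycleGraph_iff.1 hc 0
  have h1 := (isDynamic_cycleGraph_iff.1 hc 1).1
  rw [zero_add, zero_add] at h0
  rw [one_add_one_eq_two] at h1
  have := hb 0
  have := hb 1
  have := hb 2
  omega

theorem iterate_rotate_apply (c : Fin (m + 3) → ℕ) (k : ℕ) (v : Fin (m + 3)) :
    (fun (c : Fin (m + 3) → ℕ) v => c (v + 1))^[k] c v = c (v + k) := by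
  induction k generalizing v with
  | zero => simp
  | succ k ih =>
    rw [Function.iterate_succ_apply', ih]
    push_cast
    ring_nf

theorem three_dvd_of_isDynamic_cycleGraph {c : Fin (m + 3) → ℕ}
    (hc : IsDynamic (cycleGraph (m + 3)) c) (hb : ∀ v, c v < 3) : 3 ∣ m + 3 := by
  have key := isDynamic_cycleGraph_iff.1 hc
  set rotate := fun (c : Fin (m + 3) → ℕ) v => c (v + 1)
  have hrot : ∀ k, rotate^[k] c = fun v => c (v + k) := fun k => funext (iterate_rotate_apply c k)
  have hperiod3 : Function.IsPeriodicPt rotate 3 c := by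
    refine (hrot 3).trans (funext fun v => ?_)
    have h0 := key v
    have h1 := key (v + 1)
    have h2 := (key (v + 2)).1
    rw [show v + 1 + 1 = v + 2 by ring, show v + 1 + 2 = v + 3 by ring] at h1
    rw [show v + 2 + 1 = v + 3 by ring] at h2
    have := hb v
    have := hb (v + 1)
    have := hb (v + 2)
    have := hb (v + 3)
    push_cast
    omega
  have hperiodn : Function.IsPeriodicPt rotate (m + 3) c := by
    simp only [Function.IsPeriodicPt, Function.IsFixedPt, hrot, Fin.natCast_self, add_zero]
  by_contra hndvd
  have hgcd : Nat.gcd 3 (m + 3) = 1 := (Nat.prime_three.coprime_iff_not_dvd.2 hndvd).gcd_eq_one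
  have hfix := congrFun (hgcd ▸ hperiod3.gcd hperiodn) 0
  simp only [Function.iterate_one, rotate, zero_add] at hfix
  exact (key 0).1 (by simpa using hfix.symm)

theorem four_le_of_isDynamic_cycleGraph {c : Fin (m + 3) → ℕ} {k : ℕ} (h3 : ¬3 ∣ m + 3)
    (hc : IsDynamic (cycleGraph (m + 3)) c) (hb : ∀ v, c v < k) : 4 ≤ k := by
  by_contra hk
  exact h3 (three_dvd_of_isDynamic_cycleGraph hc fun v => by have := hb v; omega)

theorem five_le_of_isDynamic_cycleGraph_five {c : Fin 5 → ℕ} {k : ℕ}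
    (hc : IsDynamic (cycleGraph 5) c) (hb : ∀ v, c v < k) : 5 ≤ k := by
  have key := isDynamic_cycleGraph_iff (m := 2) |>.1 hc
  have hnear : ∀ u v : Fin 5, u ≠ v → u = v + 1 ∨ v = u + 1 ∨ u = v + 2 ∨ v = u + 2 := by decide
  have hinj : Function.Injective c := by
    intro u v huv
    by_contra hne
    rcases hnear u v hne with rfl | rfl | rfl | rfl
    exacts [(key v).1 huv.symm, (key u).1 huv, (key v).2 huv.symm, (key u).2 huv]
  simpa using Finset.card_le_card_of_injOn c (s := univ) (t := range k)
    (fun v _ => by simpa using hb v) hinj.injOn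

theorem isDynamic_cycleGraph_of_nat {f : ℕ → ℕ}
    (hf : ∀ i j d, i < m + 3 → j < m + 3 → 0 < d → d ≤ 2 →
      (j = i + d ∨ j + (m + 3) = i + d) → f i ≠ f j) :
    IsDynamic (cycleGraph (m + 3)) fun v => f v := by
  have hval (v d : Fin (m + 3)) :
      (v + d).val = v.val + d.val ∨ (v + d).val + (m + 3) = v.val + d.val := by
    rw [Fin.val_add_eq_ite]
    split_ifs <;> omega
  refine isDynamic_cycleGraph_iff.2 fun v => ⟨?_, ?_⟩
  · exact hf _ _ 1 v.isLt (v + 1).isLt one_pos one_le_two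
      (by simpa only [Fin.val_one] using hval v 1)
  · exact hf _ _ 2 v.isLt (v + 2).isLt two_pos le_rfl
      (by simpa only [Fin.val_two] using hval v 2)

def blockColoring (a i : ℕ) : ℕ :=
  if i < 3 * a then i % 3 else (i - 3 * a) % 4

theorem blockColoring_lt_four (a i : ℕ) : blockColoring a i < 4 := by
  unfold blockColoring
  split_ifs <;> omega

theorem isDynamic_cycleGraph_blockColoring {a b : ℕ} (h : m + 3 = 3 * a + 4 * b) :
    IsDynamic (cycleGraph (m + 3)) fun v => blockColoring a v :=
  isDynamic_cycleGraph_of_nat fun i j d _ _ _ _ hij => by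
    unfold blockColoring
    split_ifs <;> omega

theorem isDynamic_cycleGraph_mod_three (h : 3 ∣ m + 3) :
    IsDynamic (cycleGraph (m + 3)) fun v => v.val % 3 :=
  isDynamic_cycleGraph_of_nat (f := (· % 3)) fun i j d _ _ _ _ hij => by omega

theorem isDynamic_cycleGraph_five_val : IsDynamic (cycleGraph 5) fun v => v.val :=
  isDynamic_cycleGraph_of_nat (m := 2) (f := fun i => i) fun i j d _ _ _ _ hij => by omega

end SimpleGraph

theorem dynChrom_cycleGraph (n : ℕ) (hn : 3 ≤ n) :
    dynChrom (SimpleGraph.cycleGraph n) =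
      if n % 3 = 0 then 3 else if n = 5 then 5 else 4 := by
  obtain ⟨m, rfl⟩ : ∃ m, n = m + 3 := ⟨n - 3, by omega⟩
  by_cases h3 : 3 ∣ m + 3
  · rw [if_pos (by omega)]
    exact dynChrom_eq_of_forall_le
      ⟨_, fun v => Nat.mod_lt _ three_pos, isDynamic_cycleGraph_mod_three h3⟩
      fun _ _ => three_le_of_isDynamic_cycleGraph
  rw [if_neg (by omega)]
  by_cases h5 : m + 3 = 5
  · rw [if_pos h5]
    obtain rfl : m = 2 := by omega
    exact dynChrom_eq_of_forall_le ⟨_, Fin.isLt, isDynamic_cycleGraph_five_val⟩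
      fun _ _ => five_le_of_isDynamic_cycleGraph_five
  rw [if_neg h5]
  obtain ⟨a, b, hab⟩ : ∃ a b, m + 3 = 3 * a + 4 * b :=
    ⟨(m + 3 - 4 * ((m + 3) % 3)) / 3, (m + 3) % 3, by omega⟩
  exact dynChrom_eq_of_forall_le
    ⟨_, fun v => blockColoring_lt_four a v, isDynamic_cycleGraph_blockColoring hab⟩
    fun _ _ => four_le_of_isDynamic_cycleGraph h3
end

section
/- If every graph in a hereditary class F with fewer vertices-plus-edges than G admits a dynamic coloring from every ℓ-list assignment, G ∈ F is not dynamically ℓ-choosable, and ℓ ≥ 3, then G has minimum degree at least 2. -/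
open Finset

def Choosable {V : Type*} (G : SimpleGraph V) (ℓ : ℕ) : Prop :=
  ∀ L : V → Finset ℕ, (∀ v, (L v).card = ℓ) →
    ∃ c : V → ℕ, (∀ v, c v ∈ L v) ∧ IsProper G c

def DynChoosable {V : Type*} [Fintype V] (G : SimpleGraph V) (ℓ : ℕ) : Prop :=
  ∀ L : V → Finset ℕ, (∀ v, (L v).card = ℓ) →
    ∃ c : V → ℕ, (∀ v, c v ∈ L v) ∧ IsDynamic G c

noncomputable def listChrom {V : Type*} (G : SimpleGraph V) : ℕ :=
  sInf {ℓ | Choosable G ℓ}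

noncomputable def dynListChrom {V : Type*} [Fintype V] (G : SimpleGraph V) : ℕ :=
  sInf {ℓ | DynChoosable G ℓ}

open scoped Classical in
noncomputable def nedges {n : ℕ} (G : SimpleGraph (Fin n)) : ℕ :=
  (Finset.univ.filter (fun e : Sym2 (Fin n) => e ∈ G.edgeSet)).card

noncomputable def gsize {n : ℕ} (G : SimpleGraph (Fin n)) : ℕ := n + nedges G

/-- `F` is hereditary: it is closed under taking subgraphs (up to isomorphism). -/
def Hereditary (F : ∀ n : ℕ, SimpleGraph (Fin n) → Prop) : Prop :=
  ∀ (n m : ℕ) (G : SimpleGraph (Fin n)) (H : SimpleGraph (Fin m)),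
    F n G → (∃ f : Fin m ↪ Fin n, ∀ u v, H.Adj u v → G.Adj (f u) (f v)) → F m H

/-- `G` is dynamically `ℓ`-minimal in the class `F`. -/
def DynMinimal (F : ∀ n : ℕ, SimpleGraph (Fin n) → Prop) (ℓ : ℕ)
    {n : ℕ} (G : SimpleGraph (Fin n)) : Prop :=
  F n G ∧ ¬ DynChoosable G ℓ ∧
    ∀ (m : ℕ) (H : SimpleGraph (Fin m)), F m H → gsize H < gsize G → DynChoosable H ℓ

/-!
Let `v` be a vertex of degree at most one. Deleting `v` gives a smaller graph of the class, so it
is dynamically `ℓ`-choosable, and a dynamic colouring of `G - v` from the restricted lists extends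
to `G`: the colour of `v` only has to avoid the colour of its neighbour `u` (properness) and the
colour of one further neighbour `w` of `u` (so that `u` still sees two colours). Since `ℓ ≥ 3`,
such a colour remains in the list of `v`. The other vertices keep their neighbourhoods, and `v`
itself has degree below two, so it imposes no condition.
-/

section

variable {V W : Type*} [Fintype V] [Fintype W] {G : SimpleGraph V}

lemma eq_of_adj_of_deg_le_one {v u u' : V} (hv : deg G v ≤ 1) (hu : G.Adj v u)
    (hu' : G.Adj v u') : u = u' := by
  unfold deg at hv
  exact Finset.card_le_one.1 hv u (by simpa using hu) u' (by simpa using hu')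

lemma exists_adj_ne_of_two_le_deg {u : V} (hu : 2 ≤ deg G u) (v : V) :
    ∃ w, G.Adj u w ∧ w ≠ v := by
  unfold deg at hu
  obtain ⟨w, hw, hwv⟩ := Finset.exists_mem_ne hu v
  exact ⟨w, by simpa using hw, hwv⟩

lemma deg_comap_eq {f : W → V} (hf : Function.Injective f) {x : W}
    (hx : ∀ z, G.Adj (f x) z → z ∈ Set.range f) : deg (G.comap f) x = deg G (f x) := by
  classical
  unfold deg
  rw [← Finset.card_image_of_injective _ hf]
  congr 1
  ext z
  simp only [Finset.mem_image, Finset.mem_filter, Finset.mem_univ, true_and,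
    SimpleGraph.comap_adj]
  constructor
  · rintro ⟨y, hy, rfl⟩
    exact hy
  · intro hz
    obtain ⟨y, rfl⟩ := hx z hz
    exact ⟨y, hz, rfl⟩

variable {f : W → V} (hinj : Function.Injective f) {v : V} (hf : Set.range f = {v}ᶜ)
include hinj hf

lemma isDynamic_of_isDynamic_comap (hv : deg G v ≤ 1) {c : V → ℕ}
    (hc : IsDynamic (G.comap f) (c ∘ f)) (hvu : ∀ u, G.Adj v u → c v ≠ c u)
    (hvw : ∀ u, G.Adj v u → 2 ≤ deg G u → ∃ w, G.Adj u w ∧ c w ≠ c v) : IsDynamic G c := by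
  have hrange : ∀ x, x ≠ v → x ∈ Set.range f := fun x hx => hf ▸ hx
  constructor
  · intro x y hxy
    by_cases hx : x = v
    · subst hx
      exact hvu y hxy
    by_cases hy : y = v
    · subst hy
      exact (hvu x hxy.symm).symm
    obtain ⟨x', rfl⟩ := hrange x hx
    obtain ⟨y', rfl⟩ := hrange y hy
    exact hc.1 x' y' hxy
  · intro x hx2
    by_cases hx : x = v
    · subst hx
      omega
    by_cases hvx : G.Adj v x
    · obtain ⟨w, hw, hcw⟩ := hvw x hvx hx2
      exact ⟨v, w, hvx.symm, hw, hcw.symm⟩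
    obtain ⟨x', rfl⟩ := hrange x hx
    have hdeg : deg (G.comap f) x' = deg G (f x') :=
      deg_comap_eq hinj fun z hz => hrange z (by rintro rfl; exact hvx hz.symm)
    obtain ⟨a, b, ha, hb, hab⟩ := hc.2 x' (hdeg ▸ hx2)
    exact ⟨f a, f b, ha, hb, hab⟩

lemma exists_isDynamic_update [DecidableEq V] (hv : deg G v ≤ 1) {c : V → ℕ}
    (hc : IsDynamic (G.comap f) (c ∘ f)) :
    ∃ S : Finset ℕ, S.card ≤ 2 ∧ ∀ a ∉ S, IsDynamic G (Function.update c v a) := by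
  have hcomp : ∀ a, Function.update c v a ∘ f = c ∘ f := fun a =>
    Function.update_comp_eq_of_notMem_range c a (by simp [hf])
  by_cases hnb : ∃ u, G.Adj v u
  · obtain ⟨u, hu⟩ := hnb
    have huv : u ≠ v := hu.ne.symm
    obtain ⟨w, hw⟩ : ∃ w, 2 ≤ deg G u → G.Adj u w ∧ w ≠ v := by
      by_cases h2 : 2 ≤ deg G u
      · obtain ⟨w, hw⟩ := exists_adj_ne_of_two_le_deg h2 v
        exact ⟨w, fun _ => hw⟩
      · exact ⟨u, fun h => absurd h h2⟩
    refine ⟨{c u, c w}, Finset.card_le_two, fun a ha => ?_⟩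
    simp only [Finset.mem_insert, Finset.mem_singleton, not_or] at ha
    refine isDynamic_of_isDynamic_comap hinj hf hv ((hcomp a).symm ▸ hc) ?_ ?_
    · intro u' hu'
      rw [← eq_of_adj_of_deg_le_one hv hu hu', Function.update_self,
        Function.update_of_ne huv]
      exact ha.1
    · intro u' hu' h2
      rw [← eq_of_adj_of_deg_le_one hv hu hu'] at h2 ⊢
      obtain ⟨huw, hwv⟩ := hw h2
      refine ⟨w, huw, ?_⟩
      rw [Function.update_self, Function.update_of_ne hwv]
      exact Ne.symm ha.2
  · push Not at hnb
    exact ⟨∅, by simp, fun a _ => isDynamic_of_isDynamic_comap hinj hf hv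
      ((hcomp a).symm ▸ hc) (fun u hu => (hnb u hu).elim) (fun u hu => (hnb u hu).elim)⟩

lemma DynChoosable.of_comap {ℓ : ℕ} (hl : 3 ≤ ℓ) (hv : deg G v ≤ 1)
    (hH : DynChoosable (G.comap f) ℓ) : DynChoosable G ℓ := by
  classical
  intro L hL
  obtain ⟨c', hc'L, hc'⟩ := hH (L ∘ f) fun y => hL (f y)
  obtain ⟨S, hS, hcS⟩ := exists_isDynamic_update hinj hf hv (c := Function.extend f c' 0)
    ((Function.extend_comp hinj c' _).symm ▸ hc')
  obtain ⟨a, haL, haS⟩ := Finset.exists_mem_notMem_of_card_lt_card (s := S) (t := L v)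
    (by rw [hL v]; omega)
  refine ⟨Function.update (Function.extend f c' 0) v a, fun x => ?_, hcS a haS⟩
  by_cases hx : x = v
  · subst hx
    simpa using haL
  · obtain ⟨y, rfl⟩ : x ∈ Set.range f := hf ▸ hx
    rw [Function.update_of_ne hx, hinj.extend_apply]
    exact hc'L y

end

lemma nedges_comap_le {m n : ℕ} {f : Fin m → Fin n} (hf : Function.Injective f)
    (G : SimpleGraph (Fin n)) : nedges (G.comap f) ≤ nedges G := by
  unfold nedges
  refine Finset.card_le_card_of_injOn (Sym2.map f) (fun e he => ?_)
    (Sym2.map.injective hf).injOn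
  induction e using Sym2.ind
  simpa using he

lemma gsize_comap_succAbove_lt {m : ℕ} (G : SimpleGraph (Fin (m + 1))) (v : Fin (m + 1)) :
    gsize (G.comap v.succAbove) < gsize G := by
  have := nedges_comap_le Fin.succAbove_right_injective G (f := v.succAbove)
  unfold gsize
  omega

theorem dynMinimal_min_degree_two (F : ∀ n : ℕ, SimpleGraph (Fin n) → Prop)
    (hF : Hereditary F) (ℓ : ℕ) (hl : 3 ≤ ℓ) {n : ℕ} (G : SimpleGraph (Fin n))
    (hG : DynMinimal F ℓ G) : ∀ v, 2 ≤ deg G v := by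
  obtain ⟨hGF, hGnot, hmin⟩ := hG
  intro v
  by_contra! hv
  obtain ⟨m, rfl⟩ : ∃ m, n = m + 1 := ⟨n - 1, by have := v.pos; omega⟩
  have hHF : F m (G.comap v.succAbove) :=
    hF _ _ G _ hGF ⟨v.succAboveEmb, fun _ _ h => h⟩
  have hH := hmin m _ hHF (gsize_comap_succAbove_lt G v)
  exact hGnot (hH.of_comap Fin.succAbove_right_injective (Fin.range_succAbove v) hl (by omega))
end

section
/- Let α_1,…,α_11 be nonnegative reals with indices mod 11 such that every three cyclically consecutive values sum to at most 2, and additionally α_{11} + α_1 + α_2 ≤ 3/2 and α_2 + α_3 + α_4 ≤ 3/2 (two specified windows have sum at most 3/2). Then α_1 + … + α_11 ≤ 7. -/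
theorem eleven_windows_sum_le_seven (α : ℕ → ℝ)
    (hper : ∀ i, α (i + 11) = α i) (hpos : ∀ i, 0 ≤ α i)
    (hwin : ∀ i, α i + α (i + 1) + α (i + 2) ≤ 2)
    (hw11 : α 10 + α 11 + α 12 ≤ 3 / 2)
    (hw2 : α 1 + α 2 + α 3 ≤ 3 / 2) :
    ∑ i ∈ Finset.range 11, α i ≤ 7 := by
  have h4 := hwin 4
  have h7 := hwin 7
  have p0 := hper 0
  have p1 := hper 1
  have h1 := hpos 1
  simp [Finset.sum_range_succ] at *
  linarith
end
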